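/- Let n ≥ 3 be an integer and let a < b be real numbers. If the real parameters θ = (c, δ_0, …, δ_{n-2}) satisfy α_j^a = w_j^a for j = 0, 1, 2, then δ_{n-3} = (a+b)(b-a)^2 / (16(2n-1)). -/

import Mathlib

open Finset intervalIntegral

/-- Hermite quadrature weight at `a`:
`w_j^a = (b-a)^(j+1) * n * Σ_{k=j}^{n-1} C(k,j) (n+k-j-1)!/(n+k+1)!`. -/
noncomputable def wA (n : ℕ) (a b : ℝ) (j : ℕ) : ℝ :=
  (b - a) ^ (j + 1) * n * ∑ k ∈ Finset.Icc j (n - 1),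
    (k.choose j : ℝ) * (Nat.factorial (n + k - j - 1)) / (Nat.factorial (n + k + 1))

/-- Hermite quadrature weight at `b`: `w_j^b = (-1)^j w_j^a`. -/
noncomputable def wB (n : ℕ) (a b : ℝ) (j : ℕ) : ℝ := (-1 : ℝ) ^ j * wA n a b j

/-- RIBP weight at `a`:
`α_j^a = (-1)^(j+1) [ (a+c)^(j+1)/(j+1)! + Σ_{i=0}^{j-1} δ_{i+n-1-j} a^i/i! ]`. -/
noncomputable def alphaA (n : ℕ) (a c : ℝ) (δ : ℕ → ℝ) (j : ℕ) : ℝ :=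
  (-1 : ℝ) ^ (j + 1) * ((a + c) ^ (j + 1) / (Nat.factorial (j + 1)) +
    ∑ i ∈ Finset.range j, δ (i + n - 1 - j) * a ^ i / (Nat.factorial i))

/-- RIBP weight at `b`:
`α_j^b = (-1)^j [ (b+c)^(j+1)/(j+1)! + Σ_{i=0}^{j-1} δ_{i+n-1-j} b^i/i! ]`. -/
noncomputable def alphaB (n : ℕ) (b c : ℝ) (δ : ℕ → ℝ) (j : ℕ) : ℝ :=
  (-1 : ℝ) ^ j * ((b + c) ^ (j + 1) / (Nat.factorial (j + 1)) +
    ∑ i ∈ Finset.range j, δ (i + n - 1 - j) * b ^ i / (Nat.factorial i))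

/-- Polynomial kernel `P(x,θ) = (x+c)^n/n! + Σ_{i=0}^{n-2} δ_i x^i/i!`. -/
noncomputable def Pker (n : ℕ) (c : ℝ) (δ : ℕ → ℝ) (x : ℝ) : ℝ :=
  (x + c) ^ n / (Nat.factorial n) + ∑ i ∈ Finset.range (n - 1), δ i * x ^ i / (Nat.factorial i)

/-!
Writing `q! / (q + j + 2)!` as `1 / ((q + 1) ⋯ (q + j + 2))`, the sum defining `w_j^a` telescopes for
`j = 0, 1, 2`, giving the Obreshkov weights `w_0^a = (b - a) / 2`,
`w_1^a = (b - a)² (n - 1) / (4 (2n - 1))` and `w_2^a = (b - a)³ (n - 2) / (24 (2n - 1))`.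
The equations `α_j^a = w_j^a` for `j = 0, 1, 2` are then triangular in `a + c`, `δ_{n-2}`, `δ_{n-3}`.
-/

open scoped Nat

theorem factorial_div_factorial_add (q r : ℕ) :
    (q ! : ℝ) / (q + r)! = ∏ i ∈ range r, ((q : ℝ) + i + 1)⁻¹ := by
  rw [← Nat.factorial_mul_ascFactorial, Nat.ascFactorial_eq_prod_range, prod_inv_distrib]
  push_cast
  field_simp
  exact prod_congr rfl fun i _ => by ring

theorem wA_eq_sum_range (a b : ℝ) (j m : ℕ) :
    wA (j + m + 1) a b j = (b - a) ^ (j + 1) * ((j + m + 1 : ℕ) : ℝ) *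
      ∑ i ∈ range (m + 1),
        ((j + i).choose j : ℝ) * ∏ l ∈ range (j + 2), (((j + m + i : ℕ) : ℝ) + l + 1)⁻¹ := by
  rw [wA, ← Ico_add_one_right_eq_Icc, sum_Ico_eq_sum_range,
    show j + m + 1 - 1 + 1 - j = m + 1 by omega]
  push_cast
  refine congrArg _ (sum_congr rfl fun i _ => ?_)
  rw [mul_div_assoc, show j + m + 1 + (j + i) + 1 = (j + m + i) + (j + 2) by omega,
    show j + m + 1 + (j + i) - j - 1 = j + m + i by omega, factorial_div_factorial_add]
  push_cast
  rfl

theorem wA_zero (a b : ℝ) {n : ℕ} (hn : 0 < n) : wA n a b 0 = (b - a) / 2 := by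
  obtain ⟨m, rfl⟩ := Nat.exists_eq_add_of_lt hn
  set g : ℕ → ℝ := fun i => -((m : ℝ) + i + 1)⁻¹ with hg
  rw [wA_eq_sum_range, sum_congr rfl (g := fun i => g (i + 1) - g i) fun i _ => ?_, sum_range_sub]
  · simp only [hg]
    push_cast
    field_simp
    ring
  · simp only [hg, prod_range_succ, prod_range_zero, Nat.choose_zero_right]
    push_cast
    field_simp
    ring

theorem wA_one (a b : ℝ) {n : ℕ} (hn : 1 < n) :
    wA n a b 1 = (b - a) ^ 2 * (n - 1) / (4 * (2 * n - 1)) := by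
  obtain ⟨m, rfl⟩ := Nat.exists_eq_add_of_lt hn
  set g : ℕ → ℝ := fun i => -(m + 2 * i + 3) / (2 * (m + i + 2) * (m + i + 3)) with hg
  rw [wA_eq_sum_range, sum_congr rfl (g := fun i => g (i + 1) - g i) fun i _ => ?_, sum_range_sub,
    show 2 * ((1 + m + 1 : ℕ) : ℝ) - 1 = 2 * m + 3 by push_cast; ring]
  · simp only [hg]
    push_cast
    field_simp
    ring
  · simp only [hg, prod_range_succ, prod_range_zero, Nat.choose_one_right]
    push_cast
    field_simp
    ring

theorem wA_two (a b : ℝ) {n : ℕ} (hn : 2 < n) :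
    wA n a b 2 = (b - a) ^ 3 * (n - 2) / (24 * (2 * n - 1)) := by
  obtain ⟨m, rfl⟩ := Nat.exists_eq_add_of_lt hn
  set g : ℕ → ℝ := fun i => -(3 * (i + 2) ^ 2 + 3 * (m + 1) * (i + 2) + (m + 2) * (m + 1)) /
      (6 * (m + i + 3) * (m + i + 4) * (m + i + 5)) with hg
  rw [wA_eq_sum_range, sum_congr rfl (g := fun i => g (i + 1) - g i) fun i _ => ?_, sum_range_sub,
    show 2 * ((2 + m + 1 : ℕ) : ℝ) - 1 = 2 * m + 5 by push_cast; ring]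
  · simp only [hg]
    push_cast
    field_simp
    ring
  · simp only [hg, prod_range_succ, prod_range_zero, Nat.cast_choose_two]
    push_cast
    field_simp
    ring

theorem alphaA_zero (n : ℕ) (a c : ℝ) (δ : ℕ → ℝ) : alphaA n a c δ 0 = -(a + c) := by
  simp [alphaA]

theorem alphaA_one (n : ℕ) (a c : ℝ) (δ : ℕ → ℝ) :
    alphaA n a c δ 1 = (a + c) ^ 2 / 2 + δ (n - 2) := by
  simp [alphaA, show n - 1 - 1 = n - 2 by omega]

theorem alphaA_two (n : ℕ) (a c : ℝ) (δ : ℕ → ℝ) :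
    alphaA n a c δ 2 = -((a + c) ^ 3 / 6 + δ (n - 3) + δ (n - 2) * a) := by
  simp [alphaA, sum_range_succ, show n - 1 - 2 = n - 3 by omega]
  ring

theorem stmt11_general (n : ℕ) (hn : 3 ≤ n) (a b : ℝ) (c : ℝ) (δ : ℕ → ℝ)
    (h0 : alphaA n a c δ 0 = wA n a b 0) (h1 : alphaA n a c δ 1 = wA n a b 1)
    (h2 : alphaA n a c δ 2 = wA n a b 2) :
    δ (n - 3) = (a + b) * (b - a) ^ 2 / (16 * (2 * (n : ℝ) - 1)) := by
  rw [alphaA_zero, wA_zero a b (by omega)] at h0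
  rw [alphaA_one, wA_one a b (by omega)] at h1
  rw [alphaA_two, wA_two a b hn] at h2
  have hc : a + c = (a - b) / 2 := by linarith
  have h2n : 2 * (n : ℝ) - 1 ≠ 0 := by
    have : (3 : ℝ) ≤ n := by exact_mod_cast hn
    linarith
  have hδ₂ : δ (n - 2) = -(b - a) ^ 2 / (8 * (2 * n - 1)) := by
    rw [hc] at h1
    field_simp at h1 ⊢
    linear_combination h1 / 4
  rw [hc, hδ₂] at h2
  field_simp at h2 ⊢
  linear_combination -h2 / 576

/-- if `α_j^a = w_j^a` for `j = 0, 1, 2`, then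
`δ_{n-3} = (a+b)(b-a)²/(16(2n-1))`. -/
theorem stmt11 (n : ℕ) (hn : 3 ≤ n) (a b : ℝ) (hab : a < b) (c : ℝ) (δ : ℕ → ℝ)
    (h0 : alphaA n a c δ 0 = wA n a b 0) (h1 : alphaA n a c δ 1 = wA n a b 1)
    (h2 : alphaA n a c δ 2 = wA n a b 2) :
    δ (n - 3) = (a + b) * (b - a) ^ 2 / (16 * (2 * (n : ℝ) - 1)) :=
  stmt11_general n hn a b c δ h0 h1 h2
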